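/- arXiv:2110.14182 — 2 statements merged into one kernel-verified Lean document; each statement's English description precedes it below -/
import Mathlib

section
/- Let K ≥ 2 and let v ∈ ℝ^K satisfy v_k ≠ v̄ for every k ∈ {1,…,K}, where v̄ = (1/K) Σ_{i=1}^K v_i. Then EvSoftmax is differentiable at v, and its partial derivatives are ∂EvSoftmax(v)_i/∂v_j = EvSoftmax(v)_i·(δ_{ij} − EvSoftmax(v)_j) for all i, j ∈ {1,…,K}, where δ_{ij} is the Kronecker delta. In particular, if EvSoftmax(v)_i = 0 or EvSoftmax(v)_j = 0 then ∂EvSoftmax(v)_i/∂v_j = 0. -/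
/-! Away from the hyperplanes `v k = v̄`, the set `S` of coordinates at or above the mean is
locally constant, so near `v` the ev-softmax agrees with the softmax masked to the fixed set `S`.
That map is smooth, with the usual softmax Jacobian `p i * (δ i j - p j)`, which vanishes when
`p i` or `p j` does. -/

open Finset

/-- The ev-softmax function:
`EvSoftmax(v)_k = 𝟙{v_k ≥ v̄} e^{v_k} / ∑_l 𝟙{v_l ≥ v̄} e^{v_l}`,
where `v̄` is the arithmetic mean of `v`. -/
noncomputable def evSoftmax {K : ℕ} (v : Fin K → ℝ) (k : Fin K) : ℝ :=
  (if (∑ i : Fin K, v i) / K ≤ v k then Real.exp (v k) else 0) /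
    ∑ l : Fin K, (if (∑ i : Fin K, v i) / K ≤ v l then Real.exp (v l) else 0)

open Topology ContinuousLinearMap

theorem HasFDerivAt.div {𝕜 E : Type*} [NontriviallyNormedField 𝕜] [NormedAddCommGroup E]
    [NormedSpace 𝕜 E] {c d : E → 𝕜} {c' d' : E →L[𝕜] 𝕜} {x : E}
    (hc : HasFDerivAt c c' x) (hd : HasFDerivAt d d' x) (hx : d x ≠ 0) :
    HasFDerivAt (fun y => c y / d y) ((d x)⁻¹ • (c' - (c x / d x) • d')) x := by
  simp only [div_eq_mul_inv]
  refine (hc.mul ((hasDerivAt_inv hx).comp_hasFDerivAt x hd)).congr_fderiv ?_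
  ext w
  simp only [add_apply, smul_apply, sub_apply, smul_eq_mul, Function.comp_apply]
  field_simp
  ring

theorem ContinuousAt.eventually_le_iff {X α : Type*} [TopologicalSpace X] [LinearOrder α]
    [TopologicalSpace α] [OrderClosedTopology α] {f g : X → α} {x : X}
    (hf : ContinuousAt f x) (hg : ContinuousAt g x) (hne : f x ≠ g x) :
    ∀ᶠ y in 𝓝 x, (f y ≤ g y ↔ f x ≤ g x) := by
  rcases hne.lt_or_gt with hlt | hgt
  · filter_upwards [hf.eventually_lt hg hlt] with y hy
    exact iff_of_true hy.le hlt.le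
  · filter_upwards [hg.eventually_lt hf hgt] with y hy
    exact iff_of_false hy.not_ge hgt.not_ge

section MaskedSoftmax

variable {ι : Type*} [Fintype ι]

noncomputable def maskedSoftmax (s : Set ι) (u : ι → ℝ) (k : ι) : ℝ :=
  s.indicator (fun l => Real.exp (u l)) k / ∑ l, s.indicator (fun l => Real.exp (u l)) l

noncomputable def softmaxFDeriv (p : ι → ℝ) (i : ι) : (ι → ℝ) →L[ℝ] ℝ :=
  p i • (proj i - ∑ l, p l • (proj l : (ι → ℝ) →L[ℝ] ℝ))

theorem softmaxFDeriv_single [DecidableEq ι] (p : ι → ℝ) (i j : ι) :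
    softmaxFDeriv p i (Pi.single j 1) = p i * ((if i = j then 1 else 0) - p j) := by
  simp [softmaxFDeriv, Pi.single_apply]

theorem hasFDerivAt_indicator_exp (s : Set ι) (u : ι → ℝ) (k : ι) :
    HasFDerivAt (fun u : ι → ℝ => s.indicator (fun l => Real.exp (u l)) k)
      (s.indicator (fun l => Real.exp (u l)) k • (proj k : (ι → ℝ) →L[ℝ] ℝ)) u := by
  by_cases hk : k ∈ s
  · simpa [Set.indicator_of_mem hk] using (hasFDerivAt_apply k u).exp
  · simpa [Set.indicator_of_notMem hk] using hasFDerivAt_const (0 : ℝ) u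

theorem sum_indicator_exp_pos {s : Set ι} (hs : s.Nonempty) (u : ι → ℝ) :
    0 < ∑ l, s.indicator (fun l => Real.exp (u l)) l := by
  obtain ⟨k, hk⟩ := hs
  refine sum_pos' (fun l _ => Set.indicator_nonneg (fun l _ => (Real.exp_pos _).le) l)
    ⟨k, mem_univ k, ?_⟩
  simpa [Set.indicator_of_mem hk] using Real.exp_pos (u k)

theorem hasFDerivAt_maskedSoftmax {s : Set ι} (hs : s.Nonempty) (u : ι → ℝ) (i : ι) :
    HasFDerivAt (fun u => maskedSoftmax s u i) (softmaxFDeriv (maskedSoftmax s u) i) u := by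
  have hsum := HasFDerivAt.fun_sum fun l (_ : l ∈ univ) => hasFDerivAt_indicator_exp s u l
  refine ((hasFDerivAt_indicator_exp s u i).div hsum
    (sum_indicator_exp_pos hs u).ne').congr_fderiv ?_
  ext w
  simp only [softmaxFDeriv, maskedSoftmax, FunLike.coe_sum, Finset.sum_apply, smul_apply,
    sub_apply, smul_eq_mul, proj_apply, div_mul_eq_mul_div, ← sum_div]
  field_simp

end MaskedSoftmax

def aboveMean {K : ℕ} (v : Fin K → ℝ) : Set (Fin K) :=
  {k | (∑ i, v i) / K ≤ v k}

theorem aboveMean_nonempty {K : ℕ} [NeZero K] (v : Fin K → ℝ) : (aboveMean v).Nonempty := by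
  obtain ⟨k, -, hk⟩ := exists_le_of_sum_le univ_nonempty
    (f := fun _ => (∑ i, v i) / K) (g := v) (by simp [mul_div_cancel₀, NeZero.ne])
  exact ⟨k, hk⟩

theorem evSoftmax_eq_maskedSoftmax {K : ℕ} (v : Fin K → ℝ) :
    evSoftmax v = maskedSoftmax (aboveMean v) v := by
  ext k
  simp [evSoftmax, maskedSoftmax, aboveMean, Set.indicator_apply]

theorem eventually_aboveMean_eq {K : ℕ} {v : Fin K → ℝ}
    (hne : ∀ k, v k ≠ (∑ i, v i) / K) : ∀ᶠ u in 𝓝 v, aboveMean u = aboveMean v := by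
  have hmean : Continuous fun u : Fin K → ℝ => (∑ i, u i) / K := by fun_prop
  filter_upwards [Filter.eventually_all.2 fun k =>
    hmean.continuousAt.eventually_le_iff (continuous_apply k).continuousAt (hne k).symm]
    with u hu
  exact Set.ext hu

theorem evSoftmax_jacobian_general
    (K : ℕ) (v : Fin K → ℝ)
    (hne : ∀ k, v k ≠ (∑ i : Fin K, v i) / K) :
    (∀ i : Fin K, DifferentiableAt ℝ (fun u : Fin K → ℝ => evSoftmax u i) v) ∧
    (∀ i j : Fin K,
      fderiv ℝ (fun u : Fin K → ℝ => evSoftmax u i) v (Pi.single j 1)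
        = evSoftmax v i * ((if i = j then (1 : ℝ) else 0) - evSoftmax v j)) ∧
    (∀ i j : Fin K, evSoftmax v i = 0 ∨ evSoftmax v j = 0 →
      fderiv ℝ (fun u : Fin K → ℝ => evSoftmax u i) v (Pi.single j 1) = 0) := by
  have hderiv (i : Fin K) :
      HasFDerivAt (fun u => evSoftmax u i) (softmaxFDeriv (evSoftmax v) i) v := by
    have : NeZero K := ⟨i.pos.ne'⟩
    have hloc : (fun u => evSoftmax u i) =ᶠ[𝓝 v] fun u => maskedSoftmax (aboveMean v) u i := by
      filter_upwards [eventually_aboveMean_eq hne] with u hu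
      rw [evSoftmax_eq_maskedSoftmax, hu]
    rw [evSoftmax_eq_maskedSoftmax]
    exact (hasFDerivAt_maskedSoftmax (aboveMean_nonempty v) v i).congr_of_eventuallyEq hloc
  have hpartial (i j : Fin K) :
      fderiv ℝ (fun u => evSoftmax u i) v (Pi.single j 1)
        = evSoftmax v i * ((if i = j then (1 : ℝ) else 0) - evSoftmax v j) := by
    rw [(hderiv i).fderiv, softmaxFDeriv_single]
  refine ⟨fun i => (hderiv i).differentiableAt, hpartial, fun i j hzero => ?_⟩
  rw [hpartial]
  rcases hzero with hi | hj
  · rw [hi, zero_mul]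
  · by_cases hij : i = j
    · rw [hij, hj, zero_mul]
    · rw [hj, if_neg hij, sub_zero, mul_zero]

/-- If `K ≥ 2` and `v k ≠ v̄` for every `k`, then each component
of ev-softmax is differentiable at `v` with partial derivatives
`∂EvSoftmax(v)_i/∂v_j = EvSoftmax(v)_i (δ_{ij} - EvSoftmax(v)_j)`; in
particular the partial derivative vanishes whenever `EvSoftmax(v)_i = 0` or
`EvSoftmax(v)_j = 0`. -/
theorem evSoftmax_jacobian
    (K : ℕ) (hK : 2 ≤ K) (v : Fin K → ℝ)
    (hne : ∀ k, v k ≠ (∑ i : Fin K, v i) / K) :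
    (∀ i : Fin K, DifferentiableAt ℝ (fun u : Fin K → ℝ => evSoftmax u i) v) ∧
    (∀ i j : Fin K,
      fderiv ℝ (fun u : Fin K → ℝ => evSoftmax u i) v (Pi.single j 1)
        = evSoftmax v i * ((if i = j then (1 : ℝ) else 0) - evSoftmax v j)) ∧
    (∀ i j : Fin K, evSoftmax v i = 0 ∨ evSoftmax v j = 0 →
      fderiv ℝ (fun u : Fin K → ℝ => evSoftmax u i) v (Pi.single j 1) = 0) :=
  evSoftmax_jacobian_general K v hne
end

section
/- Let K ≥ 2 and let v ∈ ℝ^K satisfy v_k ≠ v̄ for every k ∈ {1,…,K}, where v̄ = (1/K) Σ_{i=1}^K v_i. Then for all i, j ∈ {1,…,K}, the limit as ε → 0⁺ of ∂(log EvSoftmax_{train,ε}(v)_i)/∂v_j equals δ_{ij} − EvSoftmax(v)_j; that is, lim_{ε→0⁺} ∇_v log EvSoftmax_{train,ε}(v)_i = δ_i − EvSoftmax(v), where δ_i ∈ ℝ^K is the standard basis vector and δ_{ij} is the Kronecker delta. -/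
open Finset Filter

/-- The training-time modification of ev-softmax. -/
noncomputable def evSoftmaxTrain {K : ℕ} (ε : ℝ) (v : Fin K → ℝ) (k : Fin K) : ℝ :=
  (((if (∑ i : Fin K, v i) / K ≤ v k then (1 : ℝ) else 0) + ε) * Real.exp (v k)) /
    ∑ l : Fin K, ((if (∑ i : Fin K, v i) / K ≤ v l then (1 : ℝ) else 0) + ε) * Real.exp (v l)

/-!
Off the hyperplanes `v_k = v̄` the mask `𝟙{v_k ≥ v̄}` is locally constant, so near such a `v`
the training-time ev-softmax is a softmax with fixed positive weights `𝟙{v_k ≥ v̄} + ε`. The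
gradient of the log of a weighted softmax is `δ_i` minus the weighted softmax itself, and the
weighted softmax is continuous in the weights as long as its denominator stays nonzero, which for
the mask weights holds because some `v_k` is at least the mean.
-/

open Real Topology

noncomputable def weightedSoftmax {ι : Type*} [Fintype ι] (w u : ι → ℝ) (k : ι) : ℝ :=
  w k * exp (u k) / ∑ l, w l * exp (u l)

section WeightedSoftmax

variable {ι : Type*} [Fintype ι] {w : ι → ℝ}

theorem log_weightedSoftmax (hw : ∀ l, 0 < w l) (u : ι → ℝ) (i : ι) :
    log (weightedSoftmax w u i) = log (w i) + u i - log (∑ l, w l * exp (u l)) := by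
  have hS : 0 < ∑ l, w l * exp (u l) :=
    sum_pos (fun l _ => mul_pos (hw l) (exp_pos _)) ⟨i, mem_univ i⟩
  rw [weightedSoftmax, log_div (mul_pos (hw i) (exp_pos _)).ne' hS.ne',
    log_mul (hw i).ne' (exp_pos _).ne', log_exp]

theorem hasFDerivAt_log_weightedSoftmax (hw : ∀ l, 0 < w l) (i : ι) (v : ι → ℝ) :
    HasFDerivAt (fun u => log (weightedSoftmax w u i))
      (ContinuousLinearMap.proj i -
        ∑ l, weightedSoftmax w v l • ContinuousLinearMap.proj (R := ℝ) (φ := fun _ : ι => ℝ) l)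
      v := by
  simp_rw [log_weightedSoftmax hw]
  have hS : HasFDerivAt (fun u : ι → ℝ => ∑ l, w l * exp (u l))
      (∑ l, (w l * exp (v l)) • ContinuousLinearMap.proj (R := ℝ) (φ := fun _ : ι => ℝ) l) v := by
    exact HasFDerivAt.fun_sum fun l _ =>
      (((hasFDerivAt_apply l v).exp).const_mul (w l)).congr_fderiv (smul_smul _ _ _)
  have hSpos : 0 < ∑ l, w l * exp (v l) :=
    sum_pos (fun l _ => mul_pos (hw l) (exp_pos _)) ⟨i, mem_univ i⟩
  refine (((hasFDerivAt_const (log (w i)) v).add (hasFDerivAt_apply i v)).sub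
    (hS.log hSpos.ne')).congr_fderiv ?_
  rw [zero_add, smul_sum]
  simp_rw [smul_smul, weightedSoftmax, div_eq_inv_mul]

theorem tendsto_weightedSoftmax_add_const (u : ι → ℝ) (k : ι)
    (hS : ∑ l, w l * exp (u l) ≠ 0) :
    Tendsto (fun ε : ℝ => weightedSoftmax (fun l => w l + ε) u k) (𝓝 0)
      (𝓝 (weightedSoftmax w u k)) := by
  have hcont : ContinuousAt (fun ε : ℝ => weightedSoftmax (fun l => w l + ε) u k) 0 :=
    ContinuousAt.div (by fun_prop) (by fun_prop) (by simpa using hS)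
  simpa using hcont.tendsto

end WeightedSoftmax

noncomputable def evMask {K : ℕ} (v : Fin K → ℝ) (k : Fin K) : ℝ :=
  if (∑ i : Fin K, v i) / K ≤ v k then 1 else 0

theorem evSoftmaxTrain_eq_weightedSoftmax {K : ℕ} (ε : ℝ) (v : Fin K → ℝ) :
    evSoftmaxTrain ε v = weightedSoftmax (fun l => evMask v l + ε) v :=
  rfl

theorem evSoftmax_eq_weightedSoftmax {K : ℕ} (v : Fin K → ℝ) :
    evSoftmax v = weightedSoftmax (evMask v) v := by
  funext k
  simp only [evSoftmax, weightedSoftmax, evMask, ite_mul, one_mul, zero_mul]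

theorem exists_mean_le {ι : Type*} [Fintype ι] [Nonempty ι] (v : ι → ℝ) :
    ∃ k, (∑ i, v i) / Fintype.card ι ≤ v k := by
  obtain ⟨k, -, hk⟩ := exists_le_of_sum_le (f := fun _ => (∑ i, v i) / Fintype.card ι) (g := v)
    univ_nonempty (by simp [sum_const, card_univ, nsmul_eq_mul, mul_div_cancel₀])
  exact ⟨k, hk⟩

theorem sum_evMask_mul_exp_pos {K : ℕ} [Nonempty (Fin K)] (v : Fin K → ℝ) :
    0 < ∑ l, evMask v l * exp (v l) := by
  obtain ⟨k, hk⟩ := exists_mean_le v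
  rw [Fintype.card_fin] at hk
  refine sum_pos' (fun l _ => mul_nonneg ?_ (exp_pos _).le) ⟨k, mem_univ k, ?_⟩
  · unfold evMask; split_ifs <;> norm_num
  · simp [evMask, hk, exp_pos]

theorem eventually_evMask_eq {K : ℕ} {v : Fin K → ℝ}
    (hne : ∀ k, v k ≠ (∑ i : Fin K, v i) / K) :
    ∀ᶠ u in 𝓝 v, evMask u = evMask v := by
  have hmean : Continuous fun u : Fin K → ℝ => (∑ i, u i) / K := by fun_prop
  have hside : ∀ k, ∀ᶠ u in 𝓝 v, ((∑ i, u i) / (K : ℝ) ≤ u k ↔ (∑ i, v i) / (K : ℝ) ≤ v k) := by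
    intro k
    rcases (hne k).lt_or_gt with hlt | hgt
    · filter_upwards [(continuous_apply k).continuousAt.eventually_lt hmean.continuousAt hlt]
        with u hu
      simp [not_le.2 hu, not_le.2 hlt]
    · filter_upwards [hmean.continuousAt.eventually_lt (continuous_apply k).continuousAt hgt]
        with u hu
      simp [hu.le, hgt.le]
  filter_upwards [eventually_all.2 hside] with u hu
  funext k
  simp only [evMask, hu k]

theorem fderiv_log_evSoftmaxTrain_apply_single {K : ℕ} {v : Fin K → ℝ}
    (hne : ∀ k, v k ≠ (∑ i : Fin K, v i) / K) {ε : ℝ} (hε : 0 < ε) (i j : Fin K) :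
    fderiv ℝ (fun u : Fin K → ℝ => log (evSoftmaxTrain ε u i)) v (Pi.single j 1) =
      (if i = j then 1 else 0) - evSoftmaxTrain ε v j := by
  have hw : ∀ l, 0 < evMask v l + ε := fun l => by unfold evMask; split_ifs <;> linarith
  have hloc : (fun u : Fin K → ℝ => log (evSoftmaxTrain ε u i)) =ᶠ[𝓝 v]
      fun u => log (weightedSoftmax (fun l => evMask v l + ε) u i) := by
    filter_upwards [eventually_evMask_eq hne] with u hu
    rw [evSoftmaxTrain_eq_weightedSoftmax, hu]
  rw [hloc.fderiv_eq, (hasFDerivAt_log_weightedSoftmax hw i v).fderiv,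
    evSoftmaxTrain_eq_weightedSoftmax]
  simp [Pi.single_apply, eq_comm]

theorem tendsto_evSoftmaxTrain {K : ℕ} [Nonempty (Fin K)] (v : Fin K → ℝ) (k : Fin K) :
    Tendsto (fun ε => evSoftmaxTrain ε v k) (𝓝 0) (𝓝 (evSoftmax v k)) := by
  simp_rw [evSoftmaxTrain_eq_weightedSoftmax, evSoftmax_eq_weightedSoftmax]
  exact tendsto_weightedSoftmax_add_const v k (sum_evMask_mul_exp_pos v).ne'

theorem gradient_log_evSoftmaxTrain_tendsto_general
    (K : ℕ) (v : Fin K → ℝ)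
    (hne : ∀ k, v k ≠ (∑ i : Fin K, v i) / K) :
    ∀ i j : Fin K,
      Tendsto
        (fun ε : ℝ =>
          fderiv ℝ (fun u : Fin K → ℝ => Real.log (evSoftmaxTrain ε u i)) v
            (Pi.single j 1))
        (nhdsWithin 0 (Set.Ioi 0))
        (nhds ((if i = j then (1 : ℝ) else 0) - evSoftmax v j)) := by
  intro i j
  have : Nonempty (Fin K) := ⟨i⟩
  have hderiv : Set.EqOn
      (fun ε : ℝ => fderiv ℝ (fun u : Fin K → ℝ => log (evSoftmaxTrain ε u i)) v (Pi.single j 1))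
      (fun ε => (if i = j then 1 else 0) - evSoftmaxTrain ε v j) (Set.Ioi 0) :=
    fun _ hε => fderiv_log_evSoftmaxTrain_apply_single hne hε i j
  refine Tendsto.congr' (eventuallyEq_nhdsWithin_of_eqOn hderiv).symm ?_
  exact ((tendsto_evSoftmaxTrain v j).mono_left nhdsWithin_le_nhds).const_sub _

/-- For `K ≥ 2` and `v` with `v k ≠ v̄` for all `k`, the partial
derivatives of `log EvSoftmax_{train,ε}(v)_i` converge, as `ε → 0⁺`, to
`δ_{ij} - EvSoftmax(v)_j`. -/
theorem gradient_log_evSoftmaxTrain_tendsto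
    (K : ℕ) (hK : 2 ≤ K) (v : Fin K → ℝ)
    (hne : ∀ k, v k ≠ (∑ i : Fin K, v i) / K) :
    ∀ i j : Fin K,
      Tendsto
        (fun ε : ℝ =>
          fderiv ℝ (fun u : Fin K → ℝ => Real.log (evSoftmaxTrain ε u i)) v
            (Pi.single j 1))
        (nhdsWithin 0 (Set.Ioi 0))
        (nhds ((if i = j then (1 : ℝ) else 0) - evSoftmax v j)) :=
  gradient_log_evSoftmaxTrain_tendsto_general K v hne
end
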